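/- Let η₁, η₂, η₃ > 0 be real numbers. The characteristic polynomial of the 4×4 matrix B = B(η₁, η₂, η₃) equals P₄(X) = X⁴ + (η₁ + η₂ + η₃ + 4)X³ + ((3/4)η₂η₁ + (5/2)η₂ + η₃η₁ + (3/4)η₃η₂ + 2η₃ + 6 + 2η₁)X² + ((1/2)η₃η₂η₁ + (3/4)η₃η₂ + η₂ + 4 + (3/4)η₂η₁ + 2η₁)X − (3/4)η₃η₂ − (1/4)η₃η₂η₁ − (3/4)η₂ − (1/4)η₂η₁, and P₄ has exactly one nonnegative real root; this root is positive and simple. (Spectral core of Theorem 3 for N = 4.) -/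

import Mathlib

/-!
Apart from the constant term `-η₂ (η₁ + 3) (η₃ + 1) / 4 < 0`, every coefficient of `P₄` is
nonnegative, as are those of its derivative. Hence `P₄` is strictly increasing on `[0, ∞)`,
negative at `0` and unbounded above, so it has exactly one nonnegative root, which is positive
and where the derivative is positive.
-/

open Polynomial

namespace Polynomial

variable {p : ℝ[X]}

theorem eval_pos_of_coeff_nonneg (hp : ∀ i, 0 ≤ p.coeff i) {n : ℕ} (hn : 0 < p.coeff n)
    {t : ℝ} (ht : 0 < t) : 0 < p.eval t := by
  rw [eval_eq_sum_range]
  refine Finset.sum_pos' (fun i _ => mul_nonneg (hp i) (pow_nonneg ht.le i))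
    ⟨n, ?_, mul_pos hn (pow_pos ht n)⟩
  exact Finset.mem_range_succ_iff.2 (le_natDegree_of_ne_zero hn.ne')

theorem existsUnique_nonneg_root_of_coeff_zero_neg (h0 : p.coeff 0 < 0)
    (hp : ∀ i ≠ 0, 0 ≤ p.coeff i) {n : ℕ} (hn0 : n ≠ 0) (hn : 0 < p.coeff n) :
    ∃ x : ℝ, 0 < x ∧ p.IsRoot x ∧ p.derivative.eval x ≠ 0 ∧
      ∀ y : ℝ, 0 ≤ y → p.IsRoot y → y = x := by
  have hn_le : n ≤ p.natDegree := le_natDegree_of_ne_zero hn.ne'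
  have hderiv_pos : ∀ t : ℝ, 0 < t → 0 < p.derivative.eval t := by
    refine fun t ht => eval_pos_of_coeff_nonneg (n := n - 1) (fun i => ?_) ?_ ht
    · rw [coeff_derivative]
      exact mul_nonneg (hp _ i.succ_ne_zero) (by positivity)
    · rw [coeff_derivative, Nat.sub_add_cancel (Nat.one_le_iff_ne_zero.2 hn0)]
      exact mul_pos hn (by positivity)
  have hmono : StrictMonoOn p.eval (Set.Ici 0) := by
    refine strictMonoOn_of_deriv_pos (convex_Ici 0) p.continuousOn fun t ht => ?_
    rw [interior_Ici] at ht
    rw [Polynomial.deriv]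
    exact hderiv_pos t ht
  have htop : Filter.Tendsto p.eval Filter.atTop Filter.atTop := by
    refine tendsto_atTop_of_leadingCoeff_nonneg p ?_ (hp _ (by omega))
    exact natDegree_pos_iff_degree_pos.1 (by omega)
  have heval0 : p.eval 0 < 0 := by rwa [← coeff_zero_eq_eval_zero]
  obtain ⟨x, hx, hroot⟩ := intermediate_value_Ici p.continuousOn htop
    (Set.mem_Ici.2 heval0.le)
  have hx_pos : 0 < x := (Set.mem_Ici.1 hx).lt_of_ne (by rintro rfl; linarith)
  exact ⟨x, hx_pos, hroot, (hderiv_pos x hx_pos).ne',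
    fun y hy hy_root => hmono.injOn hy hx (hy_root.trans hroot.symm)⟩

end Polynomial

namespace BoundedLLE

noncomputable def residueMatrix₄ (η₁ η₂ η₃ : ℝ) : Matrix (Fin 4) (Fin 4) ℝ :=
  !![-1, 2, 0, 0;
     (η₁ + 1) / 2, -η₁ - 1, (η₁ + 3) / 2, 0;
     0, η₂ / 2, -η₂ - 1, (η₂ + 4) / 2;
     0, 0, (η₃ - 1) / 2, -η₃ - 1]

noncomputable def P₄ (η₁ η₂ η₃ : ℝ) : ℝ[X] :=
  X ^ 4 + C (η₁ + η₂ + η₃ + 4) * X ^ 3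
    + C ((3 / 4) * η₂ * η₁ + (5 / 2) * η₂ + η₃ * η₁ + (3 / 4) * η₃ * η₂
        + 2 * η₃ + 6 + 2 * η₁) * X ^ 2
    + C ((1 / 2) * η₃ * η₂ * η₁ + (3 / 4) * η₃ * η₂ + η₂ + 4
        + (3 / 4) * η₂ * η₁ + 2 * η₁) * X
    + C (-(3 / 4) * η₃ * η₂ - (1 / 4) * η₃ * η₂ * η₁
        - (3 / 4) * η₂ - (1 / 4) * η₂ * η₁)

variable {η₁ η₂ η₃ : ℝ}

theorem charpoly_residueMatrix₄ : (residueMatrix₄ η₁ η₂ η₃).charpoly = P₄ η₁ η₂ η₃ := by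
  refine Polynomial.funext fun t => ?_
  rw [Matrix.eval_charpoly, Matrix.det_succ_row_zero, Fin.sum_univ_four]
  simp [residueMatrix₄, P₄, Matrix.det_fin_three, Fin.succAbove]
  ring

theorem coeff_P₄_four : (P₄ η₁ η₂ η₃).coeff 4 = 1 := by
  simp only [P₄, coeff_add, coeff_C_mul, coeff_X_pow, coeff_X, coeff_C]
  norm_num

theorem coeff_P₄_zero : (P₄ η₁ η₂ η₃).coeff 0 = -(η₂ * (η₁ + 3) * (η₃ + 1)) / 4 := by
  simp only [P₄, coeff_add, coeff_C_mul, coeff_X_pow, coeff_X, coeff_C]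
  norm_num
  ring

theorem coeff_P₄_nonneg (h₁ : 0 ≤ η₁) (h₂ : 0 ≤ η₂) (h₃ : 0 ≤ η₃) {i : ℕ} (hi : i ≠ 0) :
    0 ≤ (P₄ η₁ η₂ η₃).coeff i := by
  simp only [P₄, coeff_add, coeff_C_mul, coeff_X_pow, coeff_X, coeff_C, if_neg hi, add_zero]
  split_ifs <;> positivity

theorem existsUnique_nonneg_root_P₄ (h₁ : 0 ≤ η₁) (h₂ : 0 < η₂) (h₃ : 0 ≤ η₃) :
    ∃ x : ℝ, 0 < x ∧ (P₄ η₁ η₂ η₃).IsRoot x ∧ (P₄ η₁ η₂ η₃).derivative.eval x ≠ 0 ∧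
      ∀ y : ℝ, 0 ≤ y → (P₄ η₁ η₂ η₃).IsRoot y → y = x := by
  have hconst : (P₄ η₁ η₂ η₃).coeff 0 < 0 := by
    rw [coeff_P₄_zero]
    have : 0 < η₂ * (η₁ + 3) * (η₃ + 1) := by positivity
    linarith
  exact existsUnique_nonneg_root_of_coeff_zero_neg hconst
    (fun _ hi => coeff_P₄_nonneg h₁ h₂.le h₃ hi) four_ne_zero (coeff_P₄_four ▸ one_pos)

end BoundedLLE

theorem boundedLLE_N4_charpoly_and_root (η₁ η₂ η₃ : ℝ)
    (h₁ : 0 < η₁) (h₂ : 0 < η₂) (h₃ : 0 < η₃)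
    (P : Polynomial ℝ)
    (hP : P = X ^ 4 + C (η₁ + η₂ + η₃ + 4) * X ^ 3
        + C ((3 / 4) * η₂ * η₁ + (5 / 2) * η₂ + η₃ * η₁ + (3 / 4) * η₃ * η₂
            + 2 * η₃ + 6 + 2 * η₁) * X ^ 2
        + C ((1 / 2) * η₃ * η₂ * η₁ + (3 / 4) * η₃ * η₂ + η₂ + 4
            + (3 / 4) * η₂ * η₁ + 2 * η₁) * X
        + C (-(3 / 4) * η₃ * η₂ - (1 / 4) * η₃ * η₂ * η₁
            - (3 / 4) * η₂ - (1 / 4) * η₂ * η₁)) :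
    Matrix.charpoly
        (!![-1, 2, 0, 0;
            (η₁ + 1) / 2, -η₁ - 1, (η₁ + 3) / 2, 0;
            0, η₂ / 2, -η₂ - 1, (η₂ + 4) / 2;
            0, 0, (η₃ - 1) / 2, -η₃ - 1] : Matrix (Fin 4) (Fin 4) ℝ) = P ∧
    ∃ x : ℝ, 0 < x ∧ P.IsRoot x ∧ P.derivative.eval x ≠ 0 ∧
      ∀ y : ℝ, 0 ≤ y → P.IsRoot y → y = x := by
  subst hP
  exact ⟨BoundedLLE.charpoly_residueMatrix₄, BoundedLLE.existsUnique_nonneg_root_P₄ h₁.le h₂ h₃.le⟩
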